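/- Let μ ≥ 1 and let ω be a measurable function on a bounded measurable set D ⊂ ℝ² with 0 ≤ ω ≤ μ a.e. and ∫_D ω = 1. Suppose that for some point x ∈ ℝ² and constant C > 0, ∫_D log(ε/|x−y|) ω(y) dy ≥ −C, where μπε² = 1. Then for every R > 1, ∫_{D \ B_{Rε}(x)} ω(y) dy ≤ (C + 1/2)/log R. -/

import Mathlib

/-!
Split the integral at the ball `B_{Rε}(x)`. Outside the ball the kernel `log (ε / ‖x - y‖)` is at
most `-log R`, so that part contributes at most `-log R` times the mass of `ω` outside the ball.
Inside, `0 ≤ ω ≤ μ` bounds the integrand by `μ log⁺ (ε / ‖x - y‖)`, and by the layer-cake formula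
the integral of `log⁺ (ε / ‖x - y‖)` over the whole space is `|B_ε(x)| / d` in dimension `d`; in the
plane this gives `μ π ε² / 2 = 1 / 2`.
-/

open MeasureTheory Measure Real Set Metric Module

abbrev Plane := EuclideanSpace ℝ (Fin 2)

lemma log_mul_le_mul_posLog {z w M : ℝ} (hw₀ : 0 ≤ w) (hwM : w ≤ M) :
    log z * w ≤ M * log⁺ z :=
  calc log z * w ≤ log⁺ z * w := by gcongr; exact le_max_right _ _
    _ ≤ log⁺ z * M := by gcongr; exact posLog_nonneg
    _ = M * log⁺ z := mul_comm _ _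

lemma log_div_le_neg_log {ε R r : ℝ} (hε : 0 < ε) (hR : 0 < R) (hr : R * ε ≤ r) :
    log (ε / r) ≤ -log R := by
  have hr₀ : 0 < r := (mul_pos hR hε).trans_le hr
  calc log (ε / r) ≤ log (ε / (R * ε)) := by gcongr
    _ = -log R := by rw [div_mul_cancel_right₀ hε.ne', log_inv]

lemma lt_posLog_div_norm_sub_iff {E : Type*} [NormedAddCommGroup E] {x y : E} {ε t : ℝ}
    (hε : 0 < ε) (ht : 0 ≤ t) :
    t < log⁺ (ε / ‖x - y‖) ↔ y ∈ ball x (ε * exp (-t)) \ {x} := by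
  rcases eq_or_ne y x with rfl | hyx
  · simp [ht.not_gt]
  have hr : 0 < ‖x - y‖ := norm_pos_iff.2 (sub_ne_zero.2 hyx.symm)
  rw [posLog_apply, lt_max_iff, or_iff_right ht.not_gt, lt_log_iff_exp_lt (by positivity),
    lt_div_iff₀ hr, mem_sdiff, mem_ball, dist_comm, dist_eq_norm, exp_neg, ← div_eq_mul_inv,
    lt_div_iff₀ (exp_pos t), mul_comm]
  simp [hyx]

theorem log_mul_setIntegral_compl_ball_le {E : Type*} [NormedAddCommGroup E] [MeasurableSpace E]
    [OpensMeasurableSpace E] {ν : Measure E} {ω : E → ℝ} {x : E} {ε R : ℝ} (hε : 0 < ε)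
    (hR : 1 ≤ R) (hω : ∀ᵐ y ∂ν, 0 ≤ ω y)
    (hint : IntegrableOn (fun y ↦ log (ε / ‖x - y‖) * ω y) (ball x (R * ε))ᶜ ν) :
    log R * ∫ y in (ball x (R * ε))ᶜ, ω y ∂ν ≤
      -∫ y in (ball x (R * ε))ᶜ, log (ε / ‖x - y‖) * ω y ∂ν := by
  have hfar : ∀ᵐ y ∂ν.restrict (ball x (R * ε))ᶜ,
      log R * ω y ≤ -(log (ε / ‖x - y‖) * ω y) := by
    filter_upwards [ae_restrict_of_ae hω, ae_restrict_mem measurableSet_ball.compl]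
      with y hy₀ hy
    have hdist : R * ε ≤ ‖x - y‖ := by simpa [dist_eq_norm'] using hy
    nlinarith [log_div_le_neg_log hε (by linarith) hdist]
  rw [← integral_const_mul, ← integral_neg]
  exact integral_mono_of_nonneg
    ((ae_restrict_of_ae hω).mono fun _ hy ↦ mul_nonneg (log_nonneg hR) hy) hint.neg hfar

section AddHaar

variable {E : Type*} [NormedAddCommGroup E] [NormedSpace ℝ E] [FiniteDimensional ℝ E]
  [MeasurableSpace E] [BorelSpace E] [Nontrivial E] (μ : Measure E) [μ.IsAddHaarMeasure]
  {ν : Measure E} {ω : E → ℝ}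

lemma measure_lt_posLog_div_norm_sub (x : E) {ε t : ℝ} (hε : 0 < ε) (ht : 0 ≤ t) :
    μ {y | t < log⁺ (ε / ‖x - y‖)} =
      ENNReal.ofReal (exp (-finrank ℝ E * t)) * μ (ball x ε) := by
  have hset : {y | t < log⁺ (ε / ‖x - y‖)} = ball x (ε * exp (-t)) \ {x} := by
    ext y; exact lt_posLog_div_norm_sub_iff hε ht
  rw [hset, measure_sdiff_null (measure_singleton x), addHaar_ball_of_pos μ x (by positivity),
    addHaar_ball_of_pos μ x hε, ← mul_assoc, ← ENNReal.ofReal_mul (by positivity), mul_pow,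
    ← exp_nat_mul]
  ring_nf

theorem lintegral_posLog_div_norm_sub (x : E) {ε : ℝ} (hε : 0 < ε) :
    ∫⁻ y, ENNReal.ofReal (log⁺ (ε / ‖x - y‖)) ∂μ = μ (ball x ε) / finrank ℝ E := by
  have hd : (0 : ℝ) < finrank ℝ E := Nat.cast_pos.2 finrank_pos
  rw [lintegral_eq_lintegral_meas_lt μ (ae_of_all _ fun _ ↦ posLog_nonneg) (by fun_prop),
    setLIntegral_congr_fun measurableSet_Ioi
      fun t ht ↦ measure_lt_posLog_div_norm_sub μ x hε (le_of_lt ht),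
    lintegral_mul_const _ (by fun_prop),
    ← ofReal_integral_eq_lintegral_ofReal (integrableOn_exp_mul_Ioi (by linarith) _)
      (ae_of_all _ fun _ ↦ (exp_pos _).le),
    integral_exp_mul_Ioi (by linarith), mul_zero, exp_zero, neg_div_neg_eq,
    ENNReal.ofReal_div_of_pos hd, ENNReal.ofReal_one, ENNReal.ofReal_natCast, one_div,
    ENNReal.div_eq_inv_mul, mul_comm]

theorem integrable_posLog_div_norm_sub (x : E) {ε : ℝ} (hε : 0 < ε) :
    Integrable (fun y ↦ log⁺ (ε / ‖x - y‖)) μ := by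
  refine (lintegral_ofReal_ne_top_iff_integrable (Measurable.aestronglyMeasurable (by fun_prop))
    (ae_of_all _ fun _ ↦ posLog_nonneg)).1 ?_
  rw [lintegral_posLog_div_norm_sub μ x hε]
  exact ENNReal.div_ne_top measure_ball_lt_top.ne (Nat.cast_ne_zero.2 finrank_pos.ne')

theorem integral_posLog_div_norm_sub (x : E) {ε : ℝ} (hε : 0 < ε) :
    ∫ y, log⁺ (ε / ‖x - y‖) ∂μ = μ.real (ball x ε) / finrank ℝ E := by
  rw [integral_eq_lintegral_of_nonneg_ae (ae_of_all _ fun _ ↦ posLog_nonneg)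
      (Measurable.aestronglyMeasurable (by fun_prop)),
    lintegral_posLog_div_norm_sub μ x hε, ENNReal.toReal_div, ENNReal.toReal_natCast,
    measureReal_def]

theorem integral_log_div_norm_sub_mul_le {x : E} {ε M : ℝ} (hε : 0 < ε) (hM : 0 ≤ M)
    (hνμ : ν ≤ μ) (hω : ∀ᵐ y ∂ν, 0 ≤ ω y ∧ ω y ≤ M)
    (hint : Integrable (fun y ↦ log (ε / ‖x - y‖) * ω y) ν) :
    ∫ y, log (ε / ‖x - y‖) * ω y ∂ν ≤ M * μ.real (ball x ε) / finrank ℝ E := by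
  have hpos := integrable_posLog_div_norm_sub μ x hε
  calc ∫ y, log (ε / ‖x - y‖) * ω y ∂ν ≤ ∫ y, M * log⁺ (ε / ‖x - y‖) ∂ν :=
        integral_mono_ae hint ((hpos.mono_measure hνμ).const_mul M)
          (hω.mono fun _ hy ↦ log_mul_le_mul_posLog hy.1 hy.2)
    _ = M * ∫ y, log⁺ (ε / ‖x - y‖) ∂ν := integral_const_mul _ _
    _ ≤ M * ∫ y, log⁺ (ε / ‖x - y‖) ∂μ := mul_le_mul_of_nonneg_left
        (integral_mono_measure hνμ (ae_of_all _ fun _ ↦ posLog_nonneg) hpos) hM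
    _ = M * μ.real (ball x ε) / finrank ℝ E := by
        rw [integral_posLog_div_norm_sub μ x hε, mul_div_assoc]

theorem log_mul_setIntegral_compl_ball_le_sub {x : E} {ε M R : ℝ} (hε : 0 < ε) (hM : 0 ≤ M)
    (hR : 1 ≤ R) (hνμ : ν ≤ μ) (hω : ∀ᵐ y ∂ν, 0 ≤ ω y ∧ ω y ≤ M)
    (hint : Integrable (fun y ↦ log (ε / ‖x - y‖) * ω y) ν) :
    log R * ∫ y in (ball x (R * ε))ᶜ, ω y ∂ν ≤
      M * μ.real (ball x ε) / finrank ℝ E - ∫ y, log (ε / ‖x - y‖) * ω y ∂ν := by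
  have hsplit := integral_add_compl (measurableSet_ball (x := x) (ε := R * ε)) hint
  have hnear := integral_log_div_norm_sub_mul_le μ hε hM
    (restrict_le_self.trans hνμ) (ae_restrict_of_ae hω) (hint.restrict (s := ball x (R * ε)))
  have hfar := log_mul_setIntegral_compl_ball_le hε hR (hω.mono fun _ hy ↦ hy.1) hint.restrict
  linarith

end AddHaar

theorem stmt2_general (D : Set Plane)
    (μ ε : ℝ) (hε : 0 < ε) (hεμ : μ * (π * ε ^ 2) = 1)
    (ω : Plane → ℝ)
    (hbound : ∀ᵐ y ∂(volume.restrict D), 0 ≤ ω y ∧ ω y ≤ μ)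
    (x : Plane) (C : ℝ)
    (hint : IntegrableOn (fun y => Real.log (ε / ‖x - y‖) * ω y) D)
    (hlow : -C ≤ ∫ y in D, Real.log (ε / ‖x - y‖) * ω y)
    (R : ℝ) (hR : 1 < R) :
    ∫ y in D \ Metric.ball x (R * ε), ω y ≤ (C + 1 / 2) / Real.log R := by
  have hμ : 0 < μ := (pos_iff_pos_of_mul_pos (hεμ ▸ one_pos)).2 (by positivity)
  have hball : volume.real (ball x ε) = π * ε ^ 2 := by
    simp [measureReal_def, ENNReal.toReal_mul, hε.le, pi_nonneg, mul_comm]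
  have htail := log_mul_setIntegral_compl_ball_le_sub volume hε hμ.le hR.le restrict_le_self
    hbound hint
  rw [hball, finrank_euclideanSpace_fin, restrict_restrict measurableSet_ball.compl,
    ← sdiff_eq_compl_inter, hεμ, Nat.cast_ofNat] at htail
  rw [le_div_iff₀ (log_pos hR)]
  linarith

/-- If `μ ≥ 1`, `0 ≤ ω ≤ μ` a.e. on a bounded measurable `D`, `∫_D ω = 1`, and
`∫_D log(ε/|x-y|) ω(y) dy ≥ -C` with `μπε² = 1`, then for every `R > 1`,
`∫_{D \ B_{Rε}(x)} ω ≤ (C + 1/2)/log R`. -/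
theorem stmt2 (D : Set Plane) (hD : MeasurableSet D) (hDb : Bornology.IsBounded D)
    (μ ε : ℝ) (hμ : 1 ≤ μ) (hε : 0 < ε) (hεμ : μ * (π * ε ^ 2) = 1)
    (ω : Plane → ℝ) (hmeas : Measurable ω)
    (hbound : ∀ᵐ y ∂(volume.restrict D), 0 ≤ ω y ∧ ω y ≤ μ)
    (hmass : ∫ y in D, ω y = 1)
    (x : Plane) (C : ℝ) (hC : 0 < C)
    (hint : IntegrableOn (fun y => Real.log (ε / ‖x - y‖) * ω y) D)
    (hlow : -C ≤ ∫ y in D, Real.log (ε / ‖x - y‖) * ω y)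
    (R : ℝ) (hR : 1 < R) :
    ∫ y in D \ Metric.ball x (R * ε), ω y ≤ (C + 1 / 2) / Real.log R :=
  stmt2_general D μ ε hε hεμ ω hbound x C hint hlow R hR
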